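/- For the binary vote choice outcome y₂(c) = 1[-λc + a + ε ≥ 0] with λ a random variable supported in (0,1), ε ~ N(0,1) independent of λ, and fixed alignment a, the CATEs satisfy |CATE(a = -1)| < |CATE(a = 1)| < |CATE(a = 0)|, where CATE(a) = Φ(-a) - E_λ[Φ(λ - a)] and each CATE is negative. -/

import Mathlib

open MeasureTheory ProbabilityTheory

/-- The standard normal CDF. -/
noncomputable def Phi (x : ℝ) : ℝ := ((gaussianReal 0 1) (Set.Iic x)).toReal

/-- `CATE(a) = Φ(-a) - E_λ[Φ(λ - a)]` for vote choice at fixed alignment `a`. -/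
noncomputable def CATE {Ω : Type*} [MeasurableSpace Ω] (μ : Measure Ω)
    (lam : Ω → ℝ) (a : ℝ) : ℝ :=
  Phi (-a) - ∫ ω, Phi (lam ω - a) ∂μ

/-!
`-CATE(a) = E_λ[Φ(λ - a) - Φ(-a)]` averages the standard normal mass of the interval
`[-a, λ - a]`, of length `λ` and centre `λ/2 - a`. The normal density is even and decreasing in
`|x|`, so among intervals of a fixed length the mass strictly decreases with the distance of the
centre from `0`: translating `[c - h, c' - h]` by `2h` moves every point of it farther from `0`
when `c ≥ 0`. For `λ ∈ (0, 1)` the centres satisfy `|λ/2| < |λ/2 - 1| < |λ/2 + 1|`, which orders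
the three effects.
-/

open Set

theorem MeasureTheory.integral_lt_integral_of_forall_lt {α : Type*} [MeasurableSpace α]
    {μ : Measure α} [NeZero μ] {f g : α → ℝ} (hf : Integrable f μ) (hg : Integrable g μ)
    (hfg : ∀ x, f x < g x) : ∫ x, f x ∂μ < ∫ x, g x ∂μ := by
  rw [← sub_pos, ← integral_sub hg hf,
    integral_pos_iff_support_of_nonneg (fun x => sub_nonneg.2 (hfg x).le) (hg.sub hf),
    Function.support_eq_univ fun x => sub_ne_zero.2 (hfg x).ne']
  exact pos_iff_ne_zero.2 (Measure.measure_univ_ne_zero.2 (NeZero.ne μ))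

namespace ProbabilityTheory

lemma gaussianPDFReal_neg (μ : ℝ) (v : NNReal) (x : ℝ) :
    gaussianPDFReal μ v (-x) = gaussianPDFReal (-μ) v x := by
  simp only [gaussianPDFReal, sub_neg_eq_add, ← neg_add', neg_sq]

lemma gaussianPDFReal_lt_of_abs_sub_lt {μ : ℝ} {v : NNReal} (hv : v ≠ 0) {x y : ℝ}
    (h : |x - μ| < |y - μ|) : gaussianPDFReal μ v y < gaussianPDFReal μ v x := by
  have hv' : (0 : ℝ) < v := NNReal.coe_pos.2 (pos_iff_ne_zero.2 hv)
  have hsq : (x - μ) ^ 2 < (y - μ) ^ 2 := sq_lt_sq.2 h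
  simp only [gaussianPDFReal]
  gcongr

end ProbabilityTheory

lemma Phi_eq_integral (x : ℝ) : Phi x = ∫ t in Iic x, gaussianPDFReal 0 1 t := by
  rw [Phi, gaussianReal_apply_eq_integral 0 one_ne_zero, ENNReal.toReal_ofReal
    (setIntegral_nonneg measurableSet_Iic fun t _ => gaussianPDFReal_nonneg 0 1 t)]

lemma Phi_sub_Phi (a b : ℝ) : Phi b - Phi a = ∫ t in a..b, gaussianPDFReal 0 1 t := by
  rw [Phi_eq_integral, Phi_eq_integral]
  exact intervalIntegral.integral_Iic_sub_Iic (integrable_gaussianPDFReal 0 1).integrableOn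
    (integrable_gaussianPDFReal 0 1).integrableOn

lemma Phi_sub_Phi_neg (a b : ℝ) : Phi b - Phi a = Phi (-a) - Phi (-b) := by
  rw [Phi_sub_Phi, Phi_sub_Phi, ← intervalIntegral.integral_comp_neg]
  simp only [gaussianPDFReal_neg, neg_zero]

lemma Phi_strictMono : StrictMono Phi := fun a b hab => by
  have := intervalIntegral.intervalIntegral_pos_of_pos
    (integrable_gaussianPDFReal 0 1).intervalIntegrable
    (fun t => gaussianPDFReal_pos 0 1 t one_ne_zero) hab
  linarith [Phi_sub_Phi a b]

lemma measurable_Phi : Measurable Phi := Phi_strictMono.monotone.measurable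

lemma abs_Phi_le_one (x : ℝ) : |Phi x| ≤ 1 := by
  rw [Phi, abs_of_nonneg ENNReal.toReal_nonneg]
  exact measureReal_le_one

lemma integrable_Phi_comp {Ω : Type*} [MeasurableSpace Ω] {μ : Measure Ω} [IsFiniteMeasure μ]
    {f : Ω → ℝ} (hf : Measurable f) : Integrable (fun ω => Phi (f ω)) μ :=
  .of_bound (measurable_Phi.comp hf).aestronglyMeasurable 1
    (ae_of_all _ fun ω => abs_Phi_le_one (f ω))

lemma Phi_add_sub_Phi_sub_lt {h c c' : ℝ} (hh : 0 < h) (hc : 0 ≤ c) (hcc' : c < c') :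
    Phi (c' + h) - Phi (c' - h) < Phi (c + h) - Phi (c - h) := by
  have hshift : ∫ x in (c - h)..(c' - h), gaussianPDFReal 0 1 (x + 2 * h)
      < ∫ x in (c - h)..(c' - h), gaussianPDFReal 0 1 x := by
    rw [← sub_pos, ← intervalIntegral.integral_sub
      (integrable_gaussianPDFReal 0 1).intervalIntegrable
      ((integrable_gaussianPDFReal 0 1).comp_add_right _).intervalIntegrable]
    refine intervalIntegral.intervalIntegral_pos_of_pos_on ?_ (fun x hx => ?_) (by linarith)
    · exact (integrable_gaussianPDFReal 0 1).intervalIntegrable.sub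
        ((integrable_gaussianPDFReal 0 1).comp_add_right _).intervalIntegrable
    · refine sub_pos.2 (gaussianPDFReal_lt_of_abs_sub_lt one_ne_zero ?_)
      rw [sub_zero, sub_zero, abs_of_pos (by linarith [hx.1] : 0 < x + 2 * h)]
      exact abs_lt.2 ⟨by linarith [hx.1], by linarith⟩
  rw [intervalIntegral.integral_comp_add_right, ← Phi_sub_Phi, ← Phi_sub_Phi] at hshift
  ring_nf at hshift ⊢
  linarith

lemma Phi_add_sub_Phi_sub_lt_of_abs_lt {h c c' : ℝ} (hh : 0 < h) (hcc' : |c| < |c'|) :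
    Phi (c' + h) - Phi (c' - h) < Phi (c + h) - Phi (c - h) := by
  have habs : ∀ c, Phi (c + h) - Phi (c - h) = Phi (|c| + h) - Phi (|c| - h) := by
    intro c
    rcases abs_cases c with ⟨hc, -⟩ | ⟨hc, -⟩
    · rw [hc]
    · rw [hc, Phi_sub_Phi_neg]
      ring_nf
  rw [habs c, habs c']
  exact Phi_add_sub_Phi_sub_lt hh (abs_nonneg c) hcc'

section CATE

variable {Ω : Type*} [MeasurableSpace Ω] {μ : Measure Ω} [IsProbabilityMeasure μ] {lam : Ω → ℝ}

lemma CATE_eq_neg_integral (hlam : Measurable lam) (a : ℝ) :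
    CATE μ lam a = -∫ ω, (Phi (lam ω - a) - Phi (-a)) ∂μ := by
  rw [CATE, integral_sub (integrable_Phi_comp (hlam.sub_const a)) (integrable_const _),
    integral_const, probReal_univ, one_smul, neg_sub]

lemma CATE_neg (hlam : Measurable lam) (hpos : ∀ ω, 0 < lam ω) (a : ℝ) : CATE μ lam a < 0 := by
  rw [CATE_eq_neg_integral hlam, neg_neg_iff_pos, ← integral_zero Ω ℝ]
  exact integral_lt_integral_of_forall_lt (integrable_zero _ _ _)
    ((integrable_Phi_comp (hlam.sub_const a)).sub (integrable_const _))
    fun ω => sub_pos.2 (Phi_strictMono (by linarith [hpos ω]))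

lemma CATE_lt_CATE_of_abs_lt (hlam : Measurable lam) (hpos : ∀ ω, 0 < lam ω) {a b : ℝ}
    (hab : ∀ ω, |lam ω / 2 - a| < |lam ω / 2 - b|) : CATE μ lam a < CATE μ lam b := by
  rw [CATE_eq_neg_integral hlam, CATE_eq_neg_integral hlam, neg_lt_neg_iff]
  refine integral_lt_integral_of_forall_lt
    ((integrable_Phi_comp (hlam.sub_const b)).sub (integrable_const _))
    ((integrable_Phi_comp (hlam.sub_const a)).sub (integrable_const _)) fun ω => ?_
  convert Phi_add_sub_Phi_sub_lt_of_abs_lt (half_pos (hpos ω)) (hab ω) using 3 <;> ring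

end CATE

theorem stmt_6 {Ω : Type*} [MeasurableSpace Ω] (μ : Measure Ω) [IsProbabilityMeasure μ]
    (lam : Ω → ℝ) (hlam_meas : Measurable lam)
    (hlam_range : ∀ ω, lam ω ∈ Set.Ioo (0:ℝ) 1) :
    CATE μ lam (-1) < 0 ∧ CATE μ lam 1 < 0 ∧ CATE μ lam 0 < 0 ∧
    |CATE μ lam (-1)| < |CATE μ lam 1| ∧ |CATE μ lam 1| < |CATE μ lam 0| := by
  have hpos : ∀ ω, 0 < lam ω := fun ω => (hlam_range ω).1
  have hneg : ∀ a, CATE μ lam a < 0 := CATE_neg hlam_meas hpos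
  refine ⟨hneg _, hneg _, hneg _, ?_, ?_⟩ <;>
    rw [abs_of_neg (hneg _), abs_of_neg (hneg _), neg_lt_neg_iff] <;>
    refine CATE_lt_CATE_of_abs_lt hlam_meas hpos fun ω => ?_ <;>
    obtain ⟨h0, h1⟩ := hlam_range ω
  · rw [abs_of_neg (by linarith : lam ω / 2 - 1 < 0), abs_of_pos (by linarith)]
    linarith
  · rw [sub_zero, abs_of_pos (by linarith), abs_of_neg (by linarith)]
    linarith
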